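/- Let E and F be real normed vector spaces, let f : E → F be twice continuously differentiable with operator-norm bound ‖f''(z)‖ ≤ C₂ for all z ∈ E, and let k be a natural number and δ ≥ 0. Let x̃ : ℕ → E be a sequence with ‖x̃_t − x̃_{t−1}‖ ≤ δ for all 1 ≤ t ≤ k, and suppose ‖f'(x̃₀)‖ ≤ C₁ (operator norm of the Fréchet derivative at the initial point). Then ‖f(x̃_k) − f(x̃₀)‖ ≤ k·δ·C₁ + (1/2)·k²·δ²·C₂. -/

import Mathlib

open Set

/-- Lipschitz bound for the derivative from a global bound on the second derivative. -/
lemma fderiv_lipschitz_of_bound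
    {E F : Type*} [NormedAddCommGroup E] [NormedSpace ℝ E]
    [NormedAddCommGroup F] [NormedSpace ℝ F]
    (f : E → F) (hf : ContDiff ℝ 2 f) (C₂ : ℝ)
    (hC₂ : ∀ z : E, ‖fderiv ℝ (fderiv ℝ f) z‖ ≤ C₂) (x y : E) :
    ‖fderiv ℝ f y - fderiv ℝ f x‖ ≤ C₂ * ‖y - x‖ := by
  have hd : ContDiff ℝ 1 (fderiv ℝ f) := hf.fderiv_right (by norm_num)
  exact (convex_univ).norm_image_sub_le_of_norm_fderiv_le
    (fun z _ => (hd.differentiable (by norm_num)) z) (fun z _ => hC₂ z)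
    (mem_univ x) (mem_univ y)

/-- Second-order Taylor estimate with constant `C₂/2`. -/
lemma taylor_bound_of_second_deriv
    {E F : Type*} [NormedAddCommGroup E] [NormedSpace ℝ E]
    [NormedAddCommGroup F] [NormedSpace ℝ F]
    (f : E → F) (hf : ContDiff ℝ 2 f) (C₂ : ℝ)
    (hC₂ : ∀ z : E, ‖fderiv ℝ (fderiv ℝ f) z‖ ≤ C₂) (x y : E) :
    ‖f y - f x - fderiv ℝ f x (y - x)‖ ≤ 1 / 2 * C₂ * ‖y - x‖ ^ 2 := by
  have hdf : Differentiable ℝ f := hf.differentiable (by norm_num)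
  set v := y - x with hv
  set g : ℝ → F := fun t => f (x + t • v) - f x - t • (fderiv ℝ f x v) with hg
  have hline : ∀ t : ℝ, HasDerivAt (fun s : ℝ => x + s • v) v t := by
    intro t
    simpa using ((hasDerivAt_id t).smul_const v).const_add x
  have hg' : ∀ t : ℝ, HasDerivAt g (fderiv ℝ f (x + t • v) v - fderiv ℝ f x v) t := by
    intro t
    have h1 : HasDerivAt (fun s : ℝ => f (x + s • v)) (fderiv ℝ f (x + t • v) v) t := by
      exact ((hdf (x + t • v)).hasFDerivAt.comp_hasDerivAt t (hline t))
    have h2 : HasDerivAt (fun s : ℝ => s • (fderiv ℝ f x v)) (fderiv ℝ f x v) t := by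
      simpa using (hasDerivAt_id t).smul_const (fderiv ℝ f x v)
    exact (h1.sub_const (f x)).sub h2
  have hc : Continuous g := by
    have hc1 : Continuous fun t : ℝ => f (x + t • v) :=
      hdf.continuous.comp (by continuity)
    exact (hc1.sub continuous_const).sub (continuous_id.smul continuous_const)
  have hB : ∀ t : ℝ, HasDerivAt (fun s : ℝ => C₂ * ‖v‖ ^ 2 * s ^ 2 / 2) (C₂ * ‖v‖ ^ 2 * t) t := by
    intro t
    have h := ((hasDerivAt_pow 2 t).const_mul (C₂ * ‖v‖ ^ 2)).div_const 2
    have he : C₂ * ‖v‖ ^ 2 * t = C₂ * ‖v‖ ^ 2 * (↑2 * t ^ (2 - 1)) / 2 := by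
      push_cast; ring
    rw [he]; exact h
  have hbound : ∀ t ∈ Ico (0:ℝ) 1,
      ‖fderiv ℝ f (x + t • v) v - fderiv ℝ f x v‖ ≤ C₂ * ‖v‖ ^ 2 * t := by
    intro t ht
    have h1 : ‖fderiv ℝ f (x + t • v) - fderiv ℝ f x‖ ≤ C₂ * ‖t • v‖ := by
      simpa using fderiv_lipschitz_of_bound f hf C₂ hC₂ x (x + t • v)
    have h2 : ‖fderiv ℝ f (x + t • v) v - fderiv ℝ f x v‖
        ≤ ‖fderiv ℝ f (x + t • v) - fderiv ℝ f x‖ * ‖v‖ := by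
      simpa using (fderiv ℝ f (x + t • v) - fderiv ℝ f x).le_opNorm v
    have ht0 : 0 ≤ t := ht.1
    calc ‖fderiv ℝ f (x + t • v) v - fderiv ℝ f x v‖
        ≤ C₂ * ‖t • v‖ * ‖v‖ := h2.trans (mul_le_mul_of_nonneg_right h1 (norm_nonneg v))
      _ = C₂ * ‖v‖ ^ 2 * t := by
          rw [norm_smul, Real.norm_eq_abs, abs_of_nonneg ht0]; ring
  have key : ∀ z ∈ Icc (0:ℝ) 1, ‖g z‖ ≤ C₂ * ‖v‖ ^ 2 * z ^ 2 / 2 :=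
    image_norm_le_of_norm_deriv_right_le_deriv_boundary hc.continuousOn
      (fun t _ => (hg' t).hasDerivWithinAt) (by simp [hg]) hB hbound
  have h1 := key 1 (by norm_num)
  have : g 1 = f y - f x - fderiv ℝ f x (y - x) := by simp [hg, hv]
  rw [this] at h1
  calc ‖f y - f x - fderiv ℝ f x (y - x)‖ ≤ C₂ * ‖v‖ ^ 2 * 1 ^ 2 / 2 := h1
    _ = 1 / 2 * C₂ * ‖y - x‖ ^ 2 := by rw [hv]; ring

/-- Telescoping estimate for an iterative attack: if `f : E → F` is twice
continuously differentiable with `‖f''‖ ≤ C₂` everywhere, the iterates satisfy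
`‖xSeq t - xSeq (t-1)‖ ≤ δ` for `1 ≤ t ≤ k`, and `‖f' (xSeq 0)‖ ≤ C₁`, then
`‖f (xSeq k) - f (xSeq 0)‖ ≤ k δ C₁ + (1/2) k² δ² C₂`. -/
theorem iterative_attack_telescoping_bound
    {E F : Type*} [NormedAddCommGroup E] [NormedSpace ℝ E]
    [NormedAddCommGroup F] [NormedSpace ℝ F]
    (f : E → F) (hf : ContDiff ℝ 2 f)
    (C₁ C₂ : ℝ)
    (hC₂ : ∀ z : E, ‖fderiv ℝ (fderiv ℝ f) z‖ ≤ C₂)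
    (k : ℕ) (δ : ℝ) (hδ : 0 ≤ δ)
    (xSeq : ℕ → E)
    (hstep : ∀ t : ℕ, 1 ≤ t → t ≤ k → ‖xSeq t - xSeq (t - 1)‖ ≤ δ)
    (hC₁ : ‖fderiv ℝ f (xSeq 0)‖ ≤ C₁) :
    ‖f (xSeq k) - f (xSeq 0)‖ ≤ (k : ℝ) * δ * C₁ + (1 / 2) * (k : ℝ) ^ 2 * δ ^ 2 * C₂ := by
  have hC₂0 : 0 ≤ C₂ := le_trans (ContinuousLinearMap.opNorm_nonneg _) (hC₂ (xSeq 0))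
  -- strengthened induction
  have main : ∀ j : ℕ, j ≤ k →
      ‖fderiv ℝ f (xSeq j)‖ ≤ C₁ + C₂ * δ * j ∧
      ‖f (xSeq j) - f (xSeq 0)‖ ≤ (j : ℝ) * δ * C₁ + (1 / 2) * (j : ℝ) ^ 2 * δ ^ 2 * C₂ := by
    intro j
    induction j with
    | zero => intro _; constructor <;> simp [hC₁]
    | succ n ih =>
      intro hnk
      obtain ⟨ihg, ihv⟩ := ih (le_of_lt (Nat.lt_of_succ_le hnk))
      have hstepn : ‖xSeq (n + 1) - xSeq n‖ ≤ δ := by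
        simpa using hstep (n + 1) (Nat.succ_le_succ (Nat.zero_le n)) hnk
      have hgrad : ‖fderiv ℝ f (xSeq (n + 1))‖ ≤ C₁ + C₂ * δ * ((n + 1 : ℕ) : ℝ) := by
        have hlip := fderiv_lipschitz_of_bound f hf C₂ hC₂ (xSeq n) (xSeq (n + 1))
        have : ‖fderiv ℝ f (xSeq (n + 1))‖
            ≤ ‖fderiv ℝ f (xSeq n)‖ + C₂ * ‖xSeq (n + 1) - xSeq n‖ := by
          calc ‖fderiv ℝ f (xSeq (n + 1))‖
              ≤ ‖fderiv ℝ f (xSeq n)‖ + ‖fderiv ℝ f (xSeq (n + 1)) - fderiv ℝ f (xSeq n)‖ := by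
                have := norm_add_le (fderiv ℝ f (xSeq n))
                  (fderiv ℝ f (xSeq (n + 1)) - fderiv ℝ f (xSeq n))
                simpa using this
            _ ≤ ‖fderiv ℝ f (xSeq n)‖ + C₂ * ‖xSeq (n + 1) - xSeq n‖ := by linarith
        have h2 : C₂ * ‖xSeq (n + 1) - xSeq n‖ ≤ C₂ * δ :=
          mul_le_mul_of_nonneg_left hstepn hC₂0
        push_cast
        nlinarith [this]
      refine ⟨hgrad, ?_⟩
      -- per-step value bound
      have htay := taylor_bound_of_second_deriv f hf C₂ hC₂ (xSeq n) (xSeq (n + 1))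
      have happ : ‖fderiv ℝ f (xSeq n) (xSeq (n + 1) - xSeq n)‖ ≤ (C₁ + C₂ * δ * n) * δ := by
        calc ‖fderiv ℝ f (xSeq n) (xSeq (n + 1) - xSeq n)‖
            ≤ ‖fderiv ℝ f (xSeq n)‖ * ‖xSeq (n + 1) - xSeq n‖ :=
              (fderiv ℝ f (xSeq n)).le_opNorm _
          _ ≤ (C₁ + C₂ * δ * n) * δ :=
              mul_le_mul ihg hstepn (norm_nonneg _) (le_trans (norm_nonneg _) ihg)
      have hsq : 1 / 2 * C₂ * ‖xSeq (n + 1) - xSeq n‖ ^ 2 ≤ 1 / 2 * C₂ * δ ^ 2 := by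
        have := pow_le_pow_left₀ (norm_nonneg (xSeq (n + 1) - xSeq n)) hstepn 2
        nlinarith
      have hstepval : ‖f (xSeq (n + 1)) - f (xSeq n)‖
          ≤ (C₁ + C₂ * δ * n) * δ + 1 / 2 * C₂ * δ ^ 2 := by
        calc ‖f (xSeq (n + 1)) - f (xSeq n)‖
            ≤ ‖fderiv ℝ f (xSeq n) (xSeq (n + 1) - xSeq n)‖
              + ‖f (xSeq (n + 1)) - f (xSeq n) - fderiv ℝ f (xSeq n) (xSeq (n + 1) - xSeq n)‖ := by
              have := norm_add_le (fderiv ℝ f (xSeq n) (xSeq (n + 1) - xSeq n))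
                (f (xSeq (n + 1)) - f (xSeq n) - fderiv ℝ f (xSeq n) (xSeq (n + 1) - xSeq n))
              simpa using this
          _ ≤ (C₁ + C₂ * δ * n) * δ + 1 / 2 * C₂ * δ ^ 2 := by
              have := htay.trans hsq; linarith [happ]
      calc ‖f (xSeq (n + 1)) - f (xSeq 0)‖
          ≤ ‖f (xSeq (n + 1)) - f (xSeq n)‖ + ‖f (xSeq n) - f (xSeq 0)‖ :=
            norm_sub_le_norm_sub_add_norm_sub _ _ _
        _ ≤ ((n : ℝ) + 1) * δ * C₁ + (1 / 2) * ((n : ℝ) + 1) ^ 2 * δ ^ 2 * C₂ := by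
            push_cast at ihv ⊢; nlinarith
        _ = ((n + 1 : ℕ) : ℝ) * δ * C₁ + (1 / 2) * ((n + 1 : ℕ) : ℝ) ^ 2 * δ ^ 2 * C₂ := by
            push_cast; ring
  exact (main k le_rfl).2
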